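/- arXiv:1203.1292 — 7 statements merged into one kernel-verified Lean document; each statement's English description precedes it below -/
import Mathlib

section
/- A symmetrizable operator X on E extends to a bounded operator on H. More precisely, if E is a dense subspace of a Hilbert space H with inner product ⟨·,·⟩, E is itself a Banach space with norm |·|_E satisfying ‖f‖ ≤ C|f|_E, and X : E → E is bounded with ⟨Xf,g⟩ = ⟨f,Xg⟩ for all f,g ∈ E, then there exists a constant M such that ‖Xf‖ ≤ M‖f‖ for all f ∈ E, so X extends to a bounded self-adjoint operator on H. -/
/-!
Cauchy–Schwarz and symmetry give `‖Xf‖² = Re ⟨f, X²f⟩ ≤ ‖f‖ ‖X²f‖` in the `H`-norm; applying this to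
the symmetrizable operators `X ^ 2 ^ k` and iterating yields
`‖Xf‖ ^ 2 ^ n * ‖f‖ ≤ ‖f‖ ^ 2 ^ n * ‖X ^ 2 ^ n f‖ ≤ ‖f‖ ^ 2 ^ n * C |X|_E ^ 2 ^ n |f|_E`.
Taking `2 ^ n`-th roots and letting `n → ∞` kills the `E`-norms and leaves `‖Xf‖ ≤ |X|_E ‖f‖`.
The bounded extension is then symmetric on a dense set, hence self-adjoint.
-/

open scoped InnerProductSpace

theorem le_of_forall_pow_two_pow_le_mul {x y K : ℝ} (hy : 0 ≤ y)
    (h : ∀ n : ℕ, x ^ 2 ^ n ≤ K * y ^ 2 ^ n) : x ≤ y := by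
  by_contra! hyx
  obtain rfl | hy := hy.eq_or_lt
  · simpa [hyx.not_ge] using h 0
  obtain ⟨n, hn⟩ := pow_unbounded_of_one_lt K ((one_lt_div hy).mpr hyx)
  have hK : (x / y) ^ 2 ^ n ≤ K := by
    rw [div_pow, div_le_iff₀ (by positivity)]
    exact h n
  have hmono : (x / y) ^ n ≤ (x / y) ^ 2 ^ n :=
    pow_le_pow_right₀ ((one_lt_div hy).mpr hyx).le Nat.lt_two_pow_self.le
  linarith

section

variable {𝕜 E H : Type*} [RCLike 𝕜] [NormedAddCommGroup E] [NormedSpace 𝕜 E]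
  [NormedAddCommGroup H] [InnerProductSpace 𝕜 H]

theorem ContinuousLinearMap.isSelfAdjoint_of_denseRange {α : Type*} [CompleteSpace H]
    {T : H →L[𝕜] H} {e : α → H} (he : DenseRange e)
    (h : ∀ a b, ⟪T (e a), e b⟫_𝕜 = ⟪e a, T (e b)⟫_𝕜) : IsSelfAdjoint T :=
  T.isSelfAdjoint_iff_isSymmetric.mpr fun x y =>
    he.induction_on₂ (p := fun x y => ⟪T x, y⟫_𝕜 = ⟪x, T y⟫_𝕜)
      (isClosed_eq (by fun_prop) (by fun_prop)) h x y

def IsSymmetrizable (ι : E →L[𝕜] H) (X : E →L[𝕜] E) : Prop :=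
  ∀ f g : E, ⟪ι (X f), ι g⟫_𝕜 = ⟪ι f, ι (X g)⟫_𝕜

namespace IsSymmetrizable

variable {ι : E →L[𝕜] H} {X : E →L[𝕜] E}

theorem pow (hX : IsSymmetrizable ι X) (n : ℕ) : IsSymmetrizable ι (X ^ n) := by
  induction n with
  | zero => intro f g; simp
  | succ n ih =>
    intro f g
    nth_rw 1 [pow_succ]
    nth_rw 1 [pow_succ']
    rw [mul_apply_eq_comp, mul_apply_eq_comp, ih, hX]

theorem norm_sq_le (hX : IsSymmetrizable ι X) (f : E) :
    ‖ι (X f)‖ ^ 2 ≤ ‖ι f‖ * ‖ι (X (X f))‖ := by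
  rw [← inner_self_eq_norm_sq (𝕜 := 𝕜), hX]
  exact re_inner_le_norm _ _

theorem norm_pow_two_pow_mul_le (hX : IsSymmetrizable ι X) (f : E) (n : ℕ) :
    ‖ι (X f)‖ ^ 2 ^ n * ‖ι f‖ ≤ ‖ι f‖ ^ 2 ^ n * ‖ι ((X ^ 2 ^ n) f)‖ := by
  induction n with
  | zero => simp [mul_comm]
  | succ n ih =>
    obtain hb | hb := (norm_nonneg (ι f)).eq_or_lt
    · simp [← hb]
    set a := ‖ι (X f)‖
    set b := ‖ι f‖
    have hsq : ‖ι ((X ^ 2 ^ n) f)‖ ^ 2 ≤ b * ‖ι ((X ^ 2 ^ (n + 1)) f)‖ := by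
      simpa only [pow_succ 2 n, pow_mul, sq, mul_apply_eq_comp] using
        (hX.pow (2 ^ n)).norm_sq_le f
    refine le_of_mul_le_mul_left ?_ hb
    calc b * (a ^ 2 ^ (n + 1) * b) = (a ^ 2 ^ n * b) ^ 2 := by ring
      _ ≤ (b ^ 2 ^ n * ‖ι ((X ^ 2 ^ n) f)‖) ^ 2 := by gcongr
      _ = b ^ 2 ^ (n + 1) * ‖ι ((X ^ 2 ^ n) f)‖ ^ 2 := by ring
      _ ≤ b ^ 2 ^ (n + 1) * (b * ‖ι ((X ^ 2 ^ (n + 1)) f)‖) := by gcongr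
      _ = b * (b ^ 2 ^ (n + 1) * ‖ι ((X ^ 2 ^ (n + 1)) f)‖) := by ring

theorem norm_le (hX : IsSymmetrizable ι X) (f : E) : ‖ι (X f)‖ ≤ ‖X‖ * ‖ι f‖ := by
  obtain hb | hb := (norm_nonneg (ι f)).eq_or_lt
  · have h0 : ‖ι (X f)‖ ^ 2 ≤ 0 := by simpa [← hb] using hX.norm_sq_le f
    rw [← hb, mul_zero]
    exact (sq_nonpos_iff _).mp h0 |>.le
  refine le_of_forall_pow_two_pow_le_mul (K := ‖ι‖ * ‖f‖ / ‖ι f‖) (by positivity) fun n => ?_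
  have hpow : ‖ι ((X ^ 2 ^ n) f)‖ ≤ ‖ι‖ * (‖X‖ ^ 2 ^ n * ‖f‖) :=
    (ι.le_opNorm _).trans <| by
      gcongr
      exact ((X ^ 2 ^ n).le_opNorm f).trans <| by gcongr; exact norm_pow_le' X (by positivity)
  rw [div_mul_eq_mul_div, le_div_iff₀ hb]
  calc ‖ι (X f)‖ ^ 2 ^ n * ‖ι f‖ ≤ ‖ι f‖ ^ 2 ^ n * ‖ι ((X ^ 2 ^ n) f)‖ :=
        hX.norm_pow_two_pow_mul_le f n
    _ ≤ ‖ι f‖ ^ 2 ^ n * (‖ι‖ * (‖X‖ ^ 2 ^ n * ‖f‖)) := by gcongr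
    _ = ‖ι‖ * ‖f‖ * (‖X‖ * ‖ι f‖) ^ 2 ^ n := by ring

theorem exists_isSelfAdjoint_extension [CompleteSpace H] (hX : IsSymmetrizable ι X)
    (hdense : DenseRange ι) :
    ∃ Xbar : H →L[𝕜] H, IsSelfAdjoint Xbar ∧ ∀ f : E, Xbar (ι f) = ι (X f) := by
  have hext : ∀ f, (ι.comp X : E →ₗ[𝕜] H).extendOfNorm ι (ι f) = ι (X f) :=
    LinearMap.extendOfNorm_eq hdense ⟨‖X‖, hX.norm_le⟩
  refine ⟨_, ContinuousLinearMap.isSelfAdjoint_of_denseRange hdense fun f g => ?_, hext⟩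
  rw [hext, hext]
  exact hX f g

end IsSymmetrizable

end

theorem symmetrizable_bounded_and_extends_general
    {E H : Type*} [NormedAddCommGroup E] [NormedSpace ℂ E]
    [NormedAddCommGroup H] [InnerProductSpace ℂ H] [CompleteSpace H]
    (ι : E →L[ℂ] H) (hdense : DenseRange ι)
    (X : E →L[ℂ] E)
    (hsymm : ∀ f g : E, (inner ℂ (ι (X f)) (ι g) : ℂ) = inner ℂ (ι f) (ι (X g))) :
    (∃ M : ℝ, ∀ f : E, ‖ι (X f)‖ ≤ M * ‖ι f‖) ∧
    ∃ Xbar : H →L[ℂ] H, IsSelfAdjoint Xbar ∧ ∀ f : E, Xbar (ι f) = ι (X f) :=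
  ⟨⟨‖X‖, IsSymmetrizable.norm_le hsymm⟩, IsSymmetrizable.exists_isSelfAdjoint_extension hsymm hdense⟩

/-- A symmetrizable operator `X` on `E` (a dense, continuously included
Banach subspace `ι : E →L[ℂ] H` of a Hilbert space `H`) is bounded with respect to the
`H`-norm, and hence extends to a bounded self-adjoint operator on `H`. -/
theorem symmetrizable_bounded_and_extends
    {E H : Type*} [NormedAddCommGroup E] [NormedSpace ℂ E] [CompleteSpace E]
    [NormedAddCommGroup H] [InnerProductSpace ℂ H] [CompleteSpace H]
    (ι : E →L[ℂ] H) (hinj : Function.Injective ι) (hdense : DenseRange ι)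
    (X : E →L[ℂ] E)
    (hsymm : ∀ f g : E, (inner ℂ (ι (X f)) (ι g) : ℂ) = inner ℂ (ι f) (ι (X g))) :
    (∃ M : ℝ, ∀ f : E, ‖ι (X f)‖ ≤ M * ‖ι f‖) ∧
    ∃ Xbar : H →L[ℂ] H, IsSelfAdjoint Xbar ∧ ∀ f : E, Xbar (ι f) = ι (X f) :=
  symmetrizable_bounded_and_extends_general ι hdense X hsymm
end

section
/- Let E be a Hilbert space and A a positive (nonnegative self-adjoint) bounded operator on E. If X is a bounded operator on E with AX = X*A, then there exists a unique bounded self-adjoint operator Y on E such that A^{1/2} X = Y A^{1/2}, provided A is injective. -/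
/-!
Since `A X = X* A` with `A = S²`, the operator `X` is symmetric for the semi-inner product
`⟪S x, S y⟫`, so Cauchy–Schwarz gives `‖S X^k x‖² ≤ ‖S X^{2k} x‖ ‖S x‖`. Iterating along
`k = 2ⁿ` and comparing with the crude bound `‖S X^{2ⁿ} x‖ ≤ ‖S‖ ‖X‖^{2ⁿ} ‖x‖` as `n → ∞` yields
`‖S X x‖ ≤ ‖X‖ ‖S x‖`, so `S x ↦ S X x` extends from the dense range of `S` to a bounded `Y`.
Taking adjoints in `S X = Y S` gives `S Y* S = X* A = A X = S Y S`; cancelling the injective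
`S` on the left and the dense-range `S` on the right shows `Y* = Y`, and the same right
cancellation gives uniqueness.
-/

open ContinuousLinearMap Filter Topology

open scoped InnerProductSpace

theorem le_mul_of_sq_le_mul_succ {a : ℕ → ℝ} {c r C : ℝ} (ha : ∀ n, 0 ≤ a n) (hc : 0 ≤ c)
    (hr : 0 ≤ r) (hsq : ∀ n, a n ^ 2 ≤ a (n + 1) * c) (hbound : ∀ n, a n ≤ C * r ^ 2 ^ n) :
    a 0 ≤ r * c := by
  rcases hc.eq_or_lt with rfl | hc
  · have h0 := hsq 0
    simp only [mul_zero, sq_nonpos_iff] at h0 ⊢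
    exact h0.le
  -- `a 0 ^ 2 ^ n ≤ c ^ (2 ^ n - 1) * a n`, multiplied by `c` to avoid the subtraction
  have hiter : ∀ n, a 0 ^ 2 ^ n * c ≤ c ^ 2 ^ n * a n := by
    intro n
    induction n with
    | zero => simp [mul_comm]
    | succ n ih =>
      refine le_of_mul_le_mul_right ?_ hc
      calc a 0 ^ 2 ^ (n + 1) * c * c = (a 0 ^ 2 ^ n * c) ^ 2 := by ring
        _ ≤ (c ^ 2 ^ n * a n) ^ 2 := pow_le_pow_left₀ (mul_nonneg (pow_nonneg (ha 0) _) hc.le) ih 2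
        _ = c ^ 2 ^ (n + 1) * a n ^ 2 := by ring
        _ ≤ c ^ 2 ^ (n + 1) * (a (n + 1) * c) := by gcongr; exact hsq n
        _ = c ^ 2 ^ (n + 1) * a (n + 1) * c := by ring
  by_contra! hlt
  have ha0 : 0 < a 0 := (mul_nonneg hr hc.le).trans_lt hlt
  set q := r * c / a 0
  have hq : q < 1 := (div_lt_one ha0).mpr hlt
  have hc_le : ∀ n, c ≤ C * q ^ 2 ^ n := by
    intro n
    have hpos : 0 < a 0 ^ 2 ^ n := by positivity
    refine le_of_mul_le_mul_left ?_ hpos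
    calc a 0 ^ 2 ^ n * c ≤ c ^ 2 ^ n * a n := hiter n
      _ ≤ c ^ 2 ^ n * (C * r ^ 2 ^ n) := by gcongr; exact hbound n
      _ = a 0 ^ 2 ^ n * (C * q ^ 2 ^ n) := by
        simp only [q, div_pow, mul_pow]; field_simp
  have hlim : Tendsto (fun n : ℕ ↦ C * q ^ 2 ^ n) atTop (𝓝 0) := by
    simpa using ((tendsto_pow_atTop_nhds_zero_of_lt_one (by positivity) hq).comp
      (tendsto_pow_atTop_atTop_of_one_lt one_lt_two)).const_mul C
  exact hc.not_ge (ge_of_tendsto' hlim hc_le)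

namespace ContinuousLinearMap

theorem cancel_right_of_denseRange {R M₁ M₂ M₃ : Type*} [Semiring R]
    [TopologicalSpace M₁] [AddCommMonoid M₁] [Module R M₁]
    [TopologicalSpace M₂] [AddCommMonoid M₂] [Module R M₂]
    [TopologicalSpace M₃] [AddCommMonoid M₃] [Module R M₃] [T2Space M₃]
    {f : M₁ →L[R] M₂} {g₁ g₂ : M₂ →L[R] M₃} (hf : DenseRange f) (h : g₁ ∘L f = g₂ ∘L f) :
    g₁ = g₂ :=
  DFunLike.coe_injective <| hf.equalizer g₁.continuous g₂.continuous congr(⇑$h)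

variable {𝕜 E F : Type*} [RCLike 𝕜] [NormedAddCommGroup E] [InnerProductSpace 𝕜 E]
  [CompleteSpace E] [NormedAddCommGroup F] [InnerProductSpace 𝕜 F] [CompleteSpace F]

theorem denseRange_of_injective_adjoint {T : E →L[𝕜] F} (h : Function.Injective (adjoint T)) :
    DenseRange T := by
  have hker : (adjoint T).ker = ⊥ := LinearMap.ker_eq_bot.mpr h
  rw [← T.orthogonal_range, ← Submodule.topologicalClosure_eq_top_iff,
    ← Submodule.dense_iff_topologicalClosure_eq_top] at hker
  exact hker

theorem sq_norm_apply_le_of_semiconjBy {S : E →L[𝕜] F} {T : E →L[𝕜] E}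
    (h : SemiconjBy (adjoint S ∘L S) T (adjoint T)) (x : E) :
    ‖S (T x)‖ ^ 2 ≤ ‖S (T (T x))‖ * ‖S x‖ := by
  have hx : adjoint S (S (T x)) = adjoint T (adjoint S (S x)) := congr($h x)
  calc ‖S (T x)‖ ^ 2 = RCLike.re ⟪S (T (T x)), S x⟫_𝕜 := by
        rw [← inner_self_eq_norm_sq (𝕜 := 𝕜), ← adjoint_inner_right, hx, adjoint_inner_right,
          adjoint_inner_right]
    _ ≤ ‖S (T (T x))‖ * ‖S x‖ := (RCLike.re_le_norm _).trans (norm_inner_le_norm _ _)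

theorem norm_apply_le_mul_norm_of_semiconjBy {S : E →L[𝕜] F} {X : E →L[𝕜] E}
    (h : SemiconjBy (adjoint S ∘L S) X (adjoint X)) (x : E) :
    ‖S (X x)‖ ≤ ‖X‖ * ‖S x‖ := by
  have hpow (n : ℕ) : SemiconjBy (adjoint S ∘L S) (X ^ n) (adjoint (X ^ n)) := by
    simpa only [← star_eq_adjoint, star_pow] using h.pow_right n
  have hsq (n : ℕ) : ‖S ((X ^ 2 ^ n) x)‖ ^ 2 ≤ ‖S ((X ^ 2 ^ (n + 1)) x)‖ * ‖S x‖ := by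
    rw [pow_succ 2 n, pow_mul, sq (X ^ 2 ^ n), mul_apply_eq_comp]
    exact sq_norm_apply_le_of_semiconjBy (hpow (2 ^ n)) x
  have hbound (n : ℕ) : ‖S ((X ^ 2 ^ n) x)‖ ≤ ‖S‖ * ‖x‖ * ‖X‖ ^ 2 ^ n :=
    calc ‖S ((X ^ 2 ^ n) x)‖ ≤ ‖S‖ * (‖X ^ 2 ^ n‖ * ‖x‖) :=
          S.le_opNorm_of_le ((X ^ 2 ^ n).le_opNorm x)
      _ ≤ ‖S‖ * (‖X‖ ^ 2 ^ n * ‖x‖) := by gcongr; exact norm_pow_le' X (by positivity)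
      _ = ‖S‖ * ‖x‖ * ‖X‖ ^ 2 ^ n := by ring
  simpa using le_mul_of_sq_le_mul_succ (fun _ ↦ norm_nonneg _) (norm_nonneg _) (norm_nonneg _)
    hsq hbound

theorem _root_.IsSelfAdjoint.denseRange_of_injective {S : E →L[𝕜] E} (hS : IsSelfAdjoint S)
    (hinj : Function.Injective S) : DenseRange S :=
  denseRange_of_injective_adjoint (by rwa [hS.adjoint_eq])

theorem isSelfAdjoint_of_comp_eq_comp {S X Y : E →L[𝕜] E} (hS : IsSelfAdjoint S)
    (hinj : Function.Injective S) (hX : SemiconjBy (S ∘L S) X (adjoint X))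
    (hY : S ∘L X = Y ∘L S) : IsSelfAdjoint Y := by
  refine cancel_right_of_denseRange (hS.denseRange_of_injective hinj) (cancel_left hinj ?_)
  calc S ∘L (adjoint Y ∘L S) = adjoint (Y ∘L S) ∘L S := by rw [adjoint_comp, hS.adjoint_eq]; rfl
    _ = adjoint X ∘L (S ∘L S) := by rw [← hY, adjoint_comp, hS.adjoint_eq]; rfl
    _ = (S ∘L S) ∘L X := hX.eq.symm
    _ = S ∘L (Y ∘L S) := by rw [comp_assoc, hY]

end ContinuousLinearMap

theorem dieudonne_sqrt_intertwine_general
    {E : Type*} [NormedAddCommGroup E] [InnerProductSpace ℂ E] [CompleteSpace E]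
    (A X : E →L[ℂ] E) (hAinj : Function.Injective A)
    (hX : A.comp X = (adjoint X).comp A)
    (S : E →L[ℂ] E) (hS : S.IsPositive) (hS2 : S.comp S = A) :
    ∃! Y : E →L[ℂ] E, IsSelfAdjoint Y ∧ S.comp X = Y.comp S := by
  have hSsa : IsSelfAdjoint S := hS.isSelfAdjoint
  have hSinj : Function.Injective S := .of_comp (f := S) (by rwa [← coe_comp, hS2])
  have hdense : DenseRange S := hSsa.denseRange_of_injective hSinj
  have hSX : SemiconjBy (S ∘L S) X (adjoint X) := hS2 ▸ hX
  let Y : E →L[ℂ] E := (S ∘L X : E →ₗ[ℂ] E).extendOfNorm (S : E →ₗ[ℂ] E)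
  have hY : S ∘L X = Y ∘L S := ext fun x ↦ (LinearMap.extendOfNorm_eq hdense
    ⟨‖X‖, norm_apply_le_mul_norm_of_semiconjBy (by rwa [hSsa.adjoint_eq])⟩ x).symm
  refine ⟨Y, ⟨isSelfAdjoint_of_comp_eq_comp hSsa hSinj hSX hY, hY⟩, ?_⟩
  rintro Y' ⟨-, hY'⟩
  exact cancel_right_of_denseRange hdense (hY' ▸ hY)

/-- Dieudonné: if `A` is a positive injective operator on a Hilbert space
`E`, `S = A^{1/2}` its positive square root, and `X` satisfies `A X = X* A`, then there is
a unique bounded self-adjoint `Y` with `A^{1/2} X = Y A^{1/2}`. -/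
theorem dieudonne_sqrt_intertwine
    {E : Type*} [NormedAddCommGroup E] [InnerProductSpace ℂ E] [CompleteSpace E]
    (A X : E →L[ℂ] E) (hA : A.IsPositive) (hAinj : Function.Injective A)
    (hX : A.comp X = (adjoint X).comp A)
    (S : E →L[ℂ] E) (hS : S.IsPositive) (hS2 : S.comp S = A) :
    ∃! Y : E →L[ℂ] E, IsSelfAdjoint Y ∧ S.comp X = Y.comp S :=
  dieudonne_sqrt_intertwine_general A X hAinj hX S hS hS2
end

section
/- The rank-one idempotent f ⊗ Af (with ⟨f,f⟩ = 1) is an orthogonal projection on E (i.e. self-adjoint with respect to [·,·]) if and only if f is an eigenvector of A. -/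
open ContinuousLinearMap

/-- The rank-one operator `f ⊗ Af : h ↦ [h, Af] f` on `E`. -/
noncomputable def rankOneAf {E : Type*} [NormedAddCommGroup E] [InnerProductSpace ℂ E]
    [CompleteSpace E] (A : E →L[ℂ] E) (f : E) : E →L[ℂ] E :=
  (innerSL ℂ (A f)).smulRight f

/-!
`f ⊗ Af` is Mathlib's `rankOne ℂ f (A f)`, whose adjoint is `rankOne ℂ (A f) f`. A rank-one
operator `rankOne x y` with `x ≠ 0` equals its adjoint exactly when `y` is a real multiple of `x`.
The normalisation `[f, Af] = 1` forces every eigenvalue `μ` with `A f = μ f` to be the real number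
`‖f‖⁻²`.
-/

open InnerProductSpace RCLike ComplexConjugate

section RankOne

variable {𝕜 E : Type*} [RCLike 𝕜] [NormedAddCommGroup E] [InnerProductSpace 𝕜 E]

theorem eq_inv_norm_sq_of_inner_smul_right_self_eq_one {x : E} {μ : 𝕜}
    (h : inner 𝕜 x (μ • x) = 1) : μ = ((‖x‖ ^ 2)⁻¹ : ℝ) := by
  rw [inner_smul_right, inner_self_eq_norm_sq_to_K] at h
  push_cast
  exact eq_inv_of_mul_eq_one_left h

theorem rankOne_smul_self_comm_iff {x : E} (hx : x ≠ 0) (c : 𝕜) :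
    rankOne 𝕜 (c • x) x = rankOne 𝕜 x (c • x) ↔ conj c = c := by
  rw [map_smul, map_smulₛₗ, eq_comm]
  exact (smul_left_injective 𝕜 (rankOne_ne_zero hx hx)).eq_iff

variable [CompleteSpace E]

theorem isSelfAdjoint_rankOne_iff {x y : E} :
    IsSelfAdjoint (rankOne 𝕜 x y) ↔ rankOne 𝕜 y x = rankOne 𝕜 x y := by
  rw [IsSelfAdjoint, star_eq_adjoint, adjoint_rankOne]

theorem isSelfAdjoint_rankOne_iff_exists_real_smul {x y : E} (hx : x ≠ 0) :
    IsSelfAdjoint (rankOne 𝕜 x y) ↔ ∃ r : ℝ, y = (r : 𝕜) • x := by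
  rw [isSelfAdjoint_rankOne_iff]
  constructor
  · intro h
    have hy : y = (inner 𝕜 y x / inner 𝕜 x x) • x := by
      have hxx : inner 𝕜 x x ≠ 0 := inner_self_ne_zero.mpr hx
      have := congrArg (· x) h
      simp only [rankOne_apply] at this
      rw [div_eq_inv_mul, ← smul_smul, ← this, smul_smul, inv_mul_cancel₀ hxx, one_smul]
    rw [hy, rankOne_smul_self_comm_iff hx, conj_eq_iff_re] at h
    exact ⟨_, hy.trans (by rw [h])⟩
  · rintro ⟨r, rfl⟩
    exact (rankOne_smul_self_comm_iff hx _).mpr (conj_ofReal r)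

end RankOne

theorem rankOneAf_selfAdjoint_iff_eigenvector_general
    {E : Type*} [NormedAddCommGroup E] [InnerProductSpace ℂ E] [CompleteSpace E]
    (A : E →L[ℂ] E)
    (f : E) (hf : (inner ℂ f (A f) : ℂ) = 1) :
    IsSelfAdjoint (rankOneAf A f) ↔ ∃ μ : ℂ, A f = μ • f := by
  have hf0 : f ≠ 0 := by
    rintro rfl
    simp at hf
  change IsSelfAdjoint (rankOne ℂ f (A f)) ↔ _
  rw [isSelfAdjoint_rankOne_iff_exists_real_smul hf0]
  constructor
  · rintro ⟨r, hr⟩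
    exact ⟨r, hr⟩
  · rintro ⟨μ, hμ⟩
    rw [hμ] at hf
    exact ⟨_, hμ.trans (by rw [eq_inv_norm_sq_of_inner_smul_right_self_eq_one hf])⟩

/-- the rank-one idempotent `f ⊗ Af` (with `⟨f,f⟩ = [A f, f] = 1`) is an
orthogonal projection on `E` (self-adjoint for `[·,·]`) iff `f` is an eigenvector of `A`. -/
theorem rankOneAf_selfAdjoint_iff_eigenvector
    {E : Type*} [NormedAddCommGroup E] [InnerProductSpace ℂ E] [CompleteSpace E]
    (A : E →L[ℂ] E) (hA : A.IsPositive) (hAinj : Function.Injective A)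
    (f : E) (hf : (inner ℂ f (A f) : ℂ) = 1) :
    IsSelfAdjoint (rankOneAf A f) ↔ ∃ μ : ℂ, A f = μ • f :=
  rankOneAf_selfAdjoint_iff_eigenvector_general A f hf
end

section
/- Let A be a positive injective bounded operator on a Hilbert space E with [Af,g] = ⟨f,g⟩ defining a second inner product, and let H be the completion of E under ⟨·,·⟩. Then A^{1/2}, viewed as a map from H to E, is a surjective isometry: for every f ∈ H, A^{1/2}f ∈ E with |A^{1/2}f|_E = ‖f‖_H, and A^{1/2}(H) = E. -/
/-!
Put `J = ι† : H → E`. Then `J ∘ ι = A` and `ι ∘ J = Ā = S²`, so `J† J = S† S` and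
`‖J h‖ = ‖S h‖` for every `h`. Since `A` is injective so is `ι`, hence `J` has dense range, and
so do `ι ∘ J = S²` and `S`. The correspondence `S h ↦ J h` therefore extends to a unitary
`V : H ≃ E`, and `ι ∘ V = S` because both agree with `S²` on the dense range of `S`. The vectors
asked for are `V h` and `V⁻¹ e`.
-/

open ContinuousLinearMap

section

variable {𝕜 G E F : Type*} [NormedField 𝕜] [AddCommGroup G] [Module 𝕜 G]
  [NormedAddCommGroup E] [NormedSpace 𝕜 E] [CompleteSpace E]
  [NormedAddCommGroup F] [NormedSpace 𝕜 F] [CompleteSpace F]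

theorem LinearMap.exists_linearIsometryEquiv_comp_eq_of_norm_eq (T₁ : G →ₗ[𝕜] E)
    (T₂ : G →ₗ[𝕜] F) (h₁ : DenseRange T₁) (h₂ : DenseRange T₂)
    (h : ∀ x, ‖T₂ x‖ = ‖T₁ x‖) : ∃ V : E ≃ₗᵢ[𝕜] F, ∀ x, V (T₁ x) = T₂ x := by
  have hker : LinearMap.ker T₁ ≤ LinearMap.ker T₂ := fun x hx => by
    rw [LinearMap.mem_ker, ← norm_eq_zero, h, norm_eq_zero]
    exact hx
  let e₁ := (LinearMap.ker T₁).liftQ T₁ le_rfl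
  let e₂ := (LinearMap.ker T₁).liftQ T₂ hker
  have he₁ : DenseRange e₁ := DenseRange.of_comp (g := (LinearMap.ker T₁).mkQ) h₁
  have he₂ : DenseRange e₂ := DenseRange.of_comp (g := (LinearMap.ker T₁).mkQ) h₂
  have he : ∀ x, ‖e₂ (LinearEquiv.refl 𝕜 _ x)‖ = ‖e₁ x‖ := by
    rintro ⟨x⟩
    exact h x
  exact ⟨(LinearEquiv.refl 𝕜 _).extendOfIsometry e₁ e₂ he₁ he₂ he, fun x =>
    LinearEquiv.extendOfIsometry_eq _ e₁ e₂ he₁ he₂ he (Submodule.Quotient.mk x)⟩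

end

namespace ContinuousLinearMap

variable {𝕜 E F : Type*} [RCLike 𝕜]
  [NormedAddCommGroup E] [InnerProductSpace 𝕜 E] [CompleteSpace E]
  [NormedAddCommGroup F] [InnerProductSpace 𝕜 F] [CompleteSpace F]

theorem denseRange_adjoint_of_injective {T : E →L[𝕜] F} (hT : Function.Injective T) :
    DenseRange (adjoint T) := by
  have : (adjoint T).range.topologicalClosure = ⊤ := by
    rw [Submodule.topologicalClosure_eq_top_iff, orthogonal_range, adjoint_adjoint,
      LinearMap.ker_eq_bot_of_injective hT]
  simpa [DenseRange, LinearMap.coe_range] using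
    Submodule.dense_iff_topologicalClosure_eq_top.mpr this

theorem norm_apply_eq_of_adjoint_comp_self_eq {G : Type*} [NormedAddCommGroup G]
    [InnerProductSpace 𝕜 G] [CompleteSpace G] {T₁ : E →L[𝕜] F} {T₂ : E →L[𝕜] G}
    (h : adjoint T₁ ∘L T₁ = adjoint T₂ ∘L T₂) (x : E) : ‖T₁ x‖ = ‖T₂ x‖ := by
  rw [apply_norm_eq_sqrt_inner_adjoint_left, apply_norm_eq_sqrt_inner_adjoint_left, h]

end ContinuousLinearMap

theorem sqrt_solution_operator_isometry_onto_general
    {E H : Type*} [NormedAddCommGroup E] [InnerProductSpace ℂ E] [CompleteSpace E]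
    [NormedAddCommGroup H] [InnerProductSpace ℂ H] [CompleteSpace H]
    (A : E →L[ℂ] E) (hA : A.IsPositive) (hAinj : Function.Injective A)
    (ι : E →L[ℂ] H) (hdense : DenseRange ι)
    (hinner : ∀ f g : E, (inner ℂ (ι f) (ι g) : ℂ) = inner ℂ f (A g))
    (Abar : H →L[ℂ] H)
    (hext : ∀ f : E, Abar (ι f) = ι (A f))
    (S : H →L[ℂ] H) (hS : S.IsPositive) (hS2 : S.comp S = Abar) :
    (∀ h : H, ∃ e : E, ι e = S h ∧ ‖e‖ = ‖h‖) ∧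
    (∀ e : E, ∃ h : H, S h = ι e) := by
  have hadj_comp : adjoint ι ∘L ι = A := ext fun f => ext_inner_right ℂ fun g => by
    rw [comp_apply, adjoint_inner_left, hinner]
    exact (hA.isSelfAdjoint.isSymmetric f g).symm
  have hcomp_adj : ι ∘L adjoint ι = Abar := ext <| congrFun <|
    hdense.equalizer (by fun_prop) (by fun_prop) <| funext fun f => calc
      ι (adjoint ι (ι f)) = ι ((adjoint ι ∘L ι) f) := rfl
      _ = Abar (ι f) := by rw [hadj_comp, hext]
  have hι_inj : Function.Injective ι := fun f g hfg => hAinj <| by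
    rw [← hadj_comp, comp_apply, comp_apply, hfg]
  have hadj_dense : DenseRange (adjoint ι) := denseRange_adjoint_of_injective hι_inj
  have hS_dense : DenseRange S := by
    refine DenseRange.of_comp (g := S) ?_
    rw [← coe_comp, hS2, ← hcomp_adj, coe_comp]
    exact hdense.comp hadj_dense ι.continuous
  have hnorm (h : H) : ‖adjoint ι h‖ = ‖S h‖ := norm_apply_eq_of_adjoint_comp_self_eq
    (by rw [adjoint_adjoint, hcomp_adj, hS.isSelfAdjoint.adjoint_eq, hS2]) h
  obtain ⟨V, hV⟩ := LinearMap.exists_linearIsometryEquiv_comp_eq_of_norm_eq (S : H →ₗ[ℂ] H)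
    (adjoint ι : H →ₗ[ℂ] E) hS_dense hadj_dense hnorm
  have hιV : ∀ h, ι (V h) = S h := congrFun <|
    hS_dense.equalizer (by fun_prop) (by fun_prop) <| funext fun h => calc
      ι (V (S h)) = (ι ∘L adjoint ι) h := congrArg ι (hV h)
      _ = S (S h) := by rw [hcomp_adj, ← hS2, comp_apply]
  exact ⟨fun h => ⟨V h, hιV h, V.norm_map h⟩, fun e => ⟨V.symm e, by simp [← hιV]⟩⟩

/-- let `A` be a positive injective operator on the Hilbert space `E`,
`⟨f,g⟩ = [A f, g]` the associated second inner product, and `ι : E → H` the completion of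
`E` for `⟨·,·⟩` (a dense embedding with `⟨ι f, ι g⟩_H = [f, A g]`). If `Ā` is the bounded
positive extension of `A` to `H` and `S = Ā^{1/2}` its positive square root, then
`S : H → E` is a surjective isometry: `S(H) = ι(E)`, with `|S h|_E = ‖h‖_H`. -/
theorem sqrt_solution_operator_isometry_onto
    {E H : Type*} [NormedAddCommGroup E] [InnerProductSpace ℂ E] [CompleteSpace E]
    [NormedAddCommGroup H] [InnerProductSpace ℂ H] [CompleteSpace H]
    (A : E →L[ℂ] E) (hA : A.IsPositive) (hAinj : Function.Injective A)
    (ι : E →L[ℂ] H) (hdense : DenseRange ι)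
    (hinner : ∀ f g : E, (inner ℂ (ι f) (ι g) : ℂ) = inner ℂ f (A g))
    (Abar : H →L[ℂ] H) (hAbar : Abar.IsPositive)
    (hext : ∀ f : E, Abar (ι f) = ι (A f))
    (S : H →L[ℂ] H) (hS : S.IsPositive) (hS2 : S.comp S = Abar) :
    (∀ h : H, ∃ e : E, ι e = S h ∧ ‖e‖ = ‖h‖) ∧
    (∀ e : E, ∃ h : H, S h = ι e) :=
  sqrt_solution_operator_isometry_onto_general A hA hAinj ι hdense hinner Abar hext S hS hS2
end

section
/- Let G ∈ GL(E) satisfy G*AG = A where A is positive and injective. Then there exists a unique unitary operator U_G on E such that U_G A^{1/2} = A^{1/2} G, where A^{1/2} is the positive square root of A in B(E). Moreover, the map G ↦ U_G is a group homomorphism: U_{G₁G₂} = U_{G₁}U_{G₂}. -/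
/-!
Since `(A^{1/2} G)* (A^{1/2} G) = G* A G = A = (A^{1/2})* A^{1/2}`, the operators `A^{1/2} G` and
`A^{1/2}` have the same norms pointwise, so `A^{1/2} x ↦ A^{1/2} G x` is an isometry between
their ranges. Both ranges are dense (`A^{1/2}` is self-adjoint and injective, and `G` is onto),
so it extends to a unitary `U_G`. Density of the range of `A^{1/2}` also lets one cancel it on the
right, which gives uniqueness and `U_{G₁G₂} A^{1/2} = A^{1/2} G₁ G₂ = U_{G₁} U_{G₂} A^{1/2}`.
-/

open ContinuousLinearMap

theorem ContinuousLinearMap.eq_of_comp_eq_of_denseRange {R D E F : Type*} [Semiring R]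
    [TopologicalSpace D] [AddCommMonoid D] [Module R D]
    [TopologicalSpace E] [AddCommMonoid E] [Module R E]
    [TopologicalSpace F] [T2Space F] [AddCommMonoid F] [Module R F]
    {S : D →L[R] E} (hS : DenseRange S) {U V : E →L[R] F} (h : U ∘L S = V ∘L S) : U = V :=
  DFunLike.coe_injective (hS.equalizer U.continuous V.continuous congr(⇑$h))

section InnerProductSpace

variable {𝕜 E : Type*} [RCLike 𝕜] [NormedAddCommGroup E] [InnerProductSpace 𝕜 E] [CompleteSpace E]

theorem IsSelfAdjoint.denseRange_of_injective_s16 {T : E →L[𝕜] E} (hT : IsSelfAdjoint T)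
    (hinj : Function.Injective T) : DenseRange T := by
  rw [DenseRange, ← T.coe_coe, ← LinearMap.coe_range,
    Submodule.dense_iff_topologicalClosure_eq_top, Submodule.topologicalClosure_eq_top_iff,
    T.orthogonal_range, hT.adjoint_eq]
  exact LinearMap.ker_eq_bot.mpr hinj

theorem ContinuousLinearMap.norm_apply_eq_of_adjoint_comp_self_eq_s16 {F : Type*}
    [NormedAddCommGroup F] [InnerProductSpace 𝕜 F] [CompleteSpace F] {T R : E →L[𝕜] F}
    (h : adjoint T ∘L T = adjoint R ∘L R) (x : E) : ‖T x‖ = ‖R x‖ := by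
  rw [apply_norm_eq_sqrt_inner_adjoint_left, h, ← apply_norm_eq_sqrt_inner_adjoint_left]

theorem ContinuousLinearMap.exists_mem_unitary_comp_eq {S T : E →L[𝕜] E} (hS : DenseRange S)
    (hT : DenseRange T) (h : ∀ x, ‖T x‖ = ‖S x‖) : ∃ U ∈ unitary (E →L[𝕜] E), U ∘L S = T :=
  ⟨Unitary.linearIsometryEquiv.symm
      ((LinearEquiv.refl 𝕜 E).extendOfIsometry (S : E →ₗ[𝕜] E) (T : E →ₗ[𝕜] E) hS hT h),
    SetLike.coe_mem _, ext fun x => LinearEquiv.extendOfIsometry_eq _ _ _ hS hT h x⟩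

end InnerProductSpace

theorem exists_unique_unitary_intertwiner_and_multiplicative_general
    {E : Type*} [NormedAddCommGroup E] [InnerProductSpace ℂ E] [CompleteSpace E]
    (A : E →L[ℂ] E) (hAinj : Function.Injective A)
    (S : E →L[ℂ] E) (hS : S.IsPositive) (hS2 : S.comp S = A) :
    (∀ G : (E →L[ℂ] E)ˣ,
      (adjoint (G : E →L[ℂ] E)).comp (A.comp (G : E →L[ℂ] E)) = A →
      ∃! U : E →L[ℂ] E, U ∈ unitary (E →L[ℂ] E) ∧
        U.comp S = S.comp (G : E →L[ℂ] E)) ∧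
    (∀ G₁ G₂ : (E →L[ℂ] E)ˣ,
      (adjoint (G₁ : E →L[ℂ] E)).comp (A.comp (G₁ : E →L[ℂ] E)) = A →
      (adjoint (G₂ : E →L[ℂ] E)).comp (A.comp (G₂ : E →L[ℂ] E)) = A →
      ∀ U₁ U₂ U₁₂ : E →L[ℂ] E,
        U₁ ∈ unitary (E →L[ℂ] E) → U₁.comp S = S.comp (G₁ : E →L[ℂ] E) →
        U₂ ∈ unitary (E →L[ℂ] E) → U₂.comp S = S.comp (G₂ : E →L[ℂ] E) →
        U₁₂ ∈ unitary (E →L[ℂ] E) → U₁₂.comp S = S.comp ((G₁ * G₂ : (E →L[ℂ] E)ˣ) : E →L[ℂ] E) →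
        U₁₂ = U₁.comp U₂) := by
  have hS_adj : adjoint S = S := hS.isSelfAdjoint.adjoint_eq
  have hS_inj : Function.Injective S := fun x y hxy => hAinj (by rw [← hS2]; exact congr(S $hxy))
  have hS_dense : DenseRange S := hS.isSelfAdjoint.denseRange_of_injective_s16 hS_inj
  refine ⟨fun G hG => ?_, fun G₁ G₂ _ _ U₁ U₂ U₁₂ _ h₁ _ h₂ _ h₁₂ => ?_⟩
  · have hSG_dense : DenseRange (S ∘L (G : E →L[ℂ] E)) :=
      hS_dense.comp (Function.Surjective.denseRange fun y =>
        ⟨(↑G⁻¹ : E →L[ℂ] E) y, congr($(G.mul_inv) y)⟩) S.continuous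
    have hSG_norm : ∀ x, ‖(S ∘L (G : E →L[ℂ] E)) x‖ = ‖S x‖ :=
      norm_apply_eq_of_adjoint_comp_self_eq_s16 <| by
        rw [adjoint_comp, hS_adj, comp_assoc, ← comp_assoc S, hS2, hG]
    obtain ⟨U, hU, hUS⟩ := exists_mem_unitary_comp_eq hS_dense hSG_dense hSG_norm
    exact ⟨U, ⟨hU, hUS⟩, fun V hV => eq_of_comp_eq_of_denseRange hS_dense (hV.2.trans hUS.symm)⟩
  · refine eq_of_comp_eq_of_denseRange hS_dense ?_
    rw [h₁₂, Units.val_mul, mul_def, ← comp_assoc, ← h₁, comp_assoc, ← h₂, comp_assoc]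

/-- for `G ∈ GL(E)` with `G* A G = A` (`A` positive injective, `S = A^{1/2}`
its positive square root), there is a unique unitary `U_G` with `U_G A^{1/2} = A^{1/2} G`;
moreover `G ↦ U_G` is a group homomorphism: `U_{G₁G₂} = U_{G₁} U_{G₂}`. -/
theorem exists_unique_unitary_intertwiner_and_multiplicative
    {E : Type*} [NormedAddCommGroup E] [InnerProductSpace ℂ E] [CompleteSpace E]
    (A : E →L[ℂ] E) (hA : A.IsPositive) (hAinj : Function.Injective A)
    (S : E →L[ℂ] E) (hS : S.IsPositive) (hS2 : S.comp S = A) :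
    (∀ G : (E →L[ℂ] E)ˣ,
      (adjoint (G : E →L[ℂ] E)).comp (A.comp (G : E →L[ℂ] E)) = A →
      ∃! U : E →L[ℂ] E, U ∈ unitary (E →L[ℂ] E) ∧
        U.comp S = S.comp (G : E →L[ℂ] E)) ∧
    (∀ G₁ G₂ : (E →L[ℂ] E)ˣ,
      (adjoint (G₁ : E →L[ℂ] E)).comp (A.comp (G₁ : E →L[ℂ] E)) = A →
      (adjoint (G₂ : E →L[ℂ] E)).comp (A.comp (G₂ : E →L[ℂ] E)) = A →
      ∀ U₁ U₂ U₁₂ : E →L[ℂ] E,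
        U₁ ∈ unitary (E →L[ℂ] E) → U₁.comp S = S.comp (G₁ : E →L[ℂ] E) →
        U₂ ∈ unitary (E →L[ℂ] E) → U₂.comp S = S.comp (G₂ : E →L[ℂ] E) →
        U₁₂ ∈ unitary (E →L[ℂ] E) → U₁₂.comp S = S.comp ((G₁ * G₂ : (E →L[ℂ] E)ˣ) : E →L[ℂ] E) →
        U₁₂ = U₁.comp U₂) :=
  exists_unique_unitary_intertwiner_and_multiplicative_general A hAinj S hS hS2
end

section
/- Conversely, if U is a unitary operator on E with U(R(A^{1/2})) = R(A^{1/2}) (where R denotes range), then there exists G ∈ GL(E) with G*AG = A and U A^{1/2} = A^{1/2} G. -/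
/-! Since `U` preserves the range of the injective operator `S = A^{1/2}`, the relation
`S G = U S` determines a linear bijection `G` of `E`; its graph `{(f, g) | S g = U S f}` is closed,
so `G` is bounded by the closed graph theorem and has bounded inverse by the open mapping theorem.
Then `G* A G = (S G)* (S G) = (U S)* (U S) = S U* U S = A`. -/

open ContinuousLinearMap

section Factorization

variable {𝕜 E F : Type*} [NontriviallyNormedField 𝕜]
  [NormedAddCommGroup E] [NormedSpace 𝕜 E] [CompleteSpace E]
  [NormedAddCommGroup F] [NormedSpace 𝕜 F]

theorem exists_comp_eq_of_range_subset {T V : E →L[𝕜] F} (hT : Function.Injective T)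
    (hV : Set.range V ⊆ Set.range T) : ∃ G : E →L[𝕜] E, T.comp G = V := by
  let G : E →ₗ[𝕜] E := (LinearEquiv.ofInjective (T : E →ₗ[𝕜] F) hT).symm.toLinearMap ∘ₗ
    (V : E →ₗ[𝕜] F).codRestrict (LinearMap.range (T : E →ₗ[𝕜] F)) fun x => hV ⟨x, rfl⟩
  have hG : ∀ x, T (G x) = V x := fun x =>
    LinearEquiv.ofInjective_symm_apply (h := hT) _ _
  have hgraph : (G.graph : Set (E × E)) = {p | T p.2 = V p.1} := by
    ext p
    simp only [SetLike.mem_coe, LinearMap.mem_graph_iff, Set.mem_ofPred_eq, ← hG, hT.eq_iff]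
  refine ⟨⟨G, G.continuous_of_isClosed_graph ?_⟩, ext hG⟩
  rw [hgraph]
  exact isClosed_eq (T.continuous.comp continuous_snd) (V.continuous.comp continuous_fst)

theorem exists_continuousLinearEquiv_comp_eq_comp {T : E →L[𝕜] F} {U : F →L[𝕜] F}
    (hT : Function.Injective T) (hU : Function.Injective U)
    (hrange : U '' Set.range T = Set.range T) :
    ∃ G : E ≃L[𝕜] E, T.comp (G : E →L[𝕜] E) = U.comp T := by
  obtain ⟨G, hG⟩ := exists_comp_eq_of_range_subset (V := U.comp T) hT
    (by rw [coe_comp, Set.range_comp, hrange])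
  have hGT : ∀ x, T (G x) = U (T x) := fun x => congrArg (· x) hG
  have hinj : Function.Injective G := Function.Injective.of_comp (f := T) fun x y h => by
    simp only [Function.comp_apply, hGT] at h
    exact hT (hU h)
  have hsurj : Function.Surjective G := by
    intro f
    obtain ⟨_, ⟨h, rfl⟩, hh⟩ : T f ∈ U '' Set.range T := by rw [hrange]; exact ⟨f, rfl⟩
    exact ⟨h, hT (by rw [hGT, hh])⟩
  exact ⟨.ofBijective G (LinearMap.ker_eq_bot.mpr hinj) (LinearMap.range_eq_top.mpr hsurj), hG⟩

end Factorization

theorem star_mul_star_mul_self_mul_of_mul_eq_mul {R : Type*} [Monoid R] [StarMul R]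
    {s g u : R} (hu : star u * u = 1) (h : s * g = u * s) :
    star g * (star s * s) * g = star s * s := by
  calc star g * (star s * s) * g = star (s * g) * (s * g) := by simp only [star_mul, mul_assoc]
    _ = star s * (star u * u) * s := by simp only [h, star_mul, mul_assoc]
    _ = star s * s := by rw [hu, mul_one]

theorem unitary_preserving_range_sqrt_comes_from_isometry_group_general
    {E : Type*} [NormedAddCommGroup E] [InnerProductSpace ℂ E] [CompleteSpace E]
    (A : E →L[ℂ] E) (hAinj : Function.Injective A)
    (S : E →L[ℂ] E) (hS : S.IsPositive) (hS2 : S.comp S = A)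
    (U : E →L[ℂ] E) (hU : U ∈ unitary (E →L[ℂ] E))
    (hrange : U '' Set.range S = Set.range S) :
    ∃ G : (E →L[ℂ] E)ˣ,
      (adjoint (G : E →L[ℂ] E)).comp (A.comp (G : E →L[ℂ] E)) = A ∧
      U.comp S = S.comp (G : E →L[ℂ] E) := by
  have hSinj : Function.Injective S :=
    Function.Injective.of_comp (f := S) (by rw [← coe_comp, hS2]; exact hAinj)
  have hUinj : Function.Injective U :=
    Function.LeftInverse.injective (g := (star U : E →L[ℂ] E)) fun x => by
      rw [← mul_apply_eq_comp, Unitary.star_mul_self_of_mem hU, one_apply_eq_self]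
  obtain ⟨G, hG⟩ := exists_continuousLinearEquiv_comp_eq_comp hSinj hUinj hrange
  have hA : A = star S * S := by rw [hS.isSelfAdjoint.star_eq, ← hS2, mul_def]
  refine ⟨G.toUnit, ?_, hG.symm⟩
  rw [← star_eq_adjoint, ← mul_def, ← mul_def, ← mul_assoc, hA]
  exact star_mul_star_mul_self_mul_of_mul_eq_mul (Unitary.star_mul_self_of_mem hU) hG

/-- conversely, if `U` is a unitary operator on `E` preserving the range of
`S = A^{1/2}` (`A` positive injective), then there is `G ∈ GL(E)` with `G* A G = A` and
`U A^{1/2} = A^{1/2} G`. -/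
theorem unitary_preserving_range_sqrt_comes_from_isometry_group
    {E : Type*} [NormedAddCommGroup E] [InnerProductSpace ℂ E] [CompleteSpace E]
    (A : E →L[ℂ] E) (hA : A.IsPositive) (hAinj : Function.Injective A)
    (S : E →L[ℂ] E) (hS : S.IsPositive) (hS2 : S.comp S = A)
    (U : E →L[ℂ] E) (hU : U ∈ unitary (E →L[ℂ] E))
    (hrange : U '' Set.range S = Set.range S) :
    ∃ G : (E →L[ℂ] E)ˣ,
      (adjoint (G : E →L[ℂ] E)).comp (A.comp (G : E →L[ℂ] E)) = A ∧
      U.comp S = S.comp (G : E →L[ℂ] E) :=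
  unitary_preserving_range_sqrt_comes_from_isometry_group_general A hAinj S hS hS2 U hU hrange
end

section
/- On the torus 𝕋, the multiplication operator M_z by the identity function z is not in the range of the exponential map of Γ: there is no bounded operator X on H¹(𝕋) which is L²-antihermitian (⟨Xf,g⟩ = −⟨f,Xg⟩) with e^X = M_z. Key step: if e^X = M_z with X bounded and commuting with M_z, then X = M_g for g = X(1), and then z = e^{g} with g continuous on 𝕋, contradicting that z has winding number 1. -/
open MeasureTheory

/-- The weight measure `∑_n (1+n²) δ_n` on `ℤ`, so that `L²` of this measure is the
Sobolev space `H¹(𝕋)` in the Fourier coordinates: `H¹(𝕋) ≅ {a : ℤ → ℂ | ∑ (1+n²)|aₙ|² < ∞}`. -/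
noncomputable def sobolevWeight : Measure ℤ :=
  (Measure.count : Measure ℤ).withDensity fun n => 1 + (n.natAbs : ENNReal) ^ 2

/-- `H¹(𝕋)` realized via Fourier coefficients as a weighted `ℓ²(ℤ)` space. -/
noncomputable abbrev H1Torus := Lp ℂ 2 sobolevWeight

/-!
For `z ∈ 𝕋` the functional `Φ_z a = ∑ aₙ zⁿ` (evaluation of the Fourier series at `z`) is
continuous on `H¹(𝕋)`: it is the inner product with the reproducing kernel `z̄ⁿ / (1 + n²)`.
It satisfies `Φ_z ∘ M_z = z • Φ_z`, and since the basis vectors span a dense subspace, every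
continuous functional with this property is a multiple of `Φ_z`. If `exp X = M_z`, then `X`
commutes with `M_z`, so `Φ_z ∘ X = g z • Φ_z` with `g z = Φ_z (X 1)`; exponentiating gives
`exp (g z) = z` with `g` continuous on `𝕋`, which is impossible.
-/

open ComplexConjugate

theorem Circle.not_exists_continuous_log :
    ¬ ∃ g : Circle → ℂ, Continuous g ∧ ∀ z, Complex.exp (g z) = z := by
  rintro ⟨g, hg, hexp⟩
  -- `θ ↦ g (e^{iθ})` and `θ ↦ iθ + g 1` lift the same path through `exp`, so they coincide,
  -- yet only the first is `2π`-periodic.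
  have hlift : g ∘ Circle.exp = fun θ : ℝ => θ * Complex.I + g 1 := by
    refine Complex.isCoveringMap_exp.eq_of_comp_eq (hg.comp Circle.exp.continuous)
      (by fun_prop) (funext fun θ => Subtype.ext ?_) 0 (by simp)
    simp [Complex.exp_add, hexp]
  have h2pi := congrFun hlift (2 * Real.pi)
  simp only [Function.comp_apply, Circle.exp_two_pi] at h2pi
  simp [Real.pi_ne_zero] at h2pi

theorem ContinuousLinearMap.comp_exp_eq_exp_smul_of_comp_eq_smul {𝕜 E F : Type*} [RCLike 𝕜]
    [NormedAddCommGroup E] [NormedSpace 𝕜 E] [CompleteSpace E]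
    [NormedAddCommGroup F] [NormedSpace 𝕜 F]
    {L : E →L[𝕜] F} {X : E →L[𝕜] E} {c : 𝕜} (h : L ∘L X = c • L) :
    L ∘L NormedSpace.exp X = NormedSpace.exp c • L := by
  have hpow (k : ℕ) : L ∘L X ^ k = c ^ k • L := by
    induction k with
    | zero =>
      rw [pow_zero, pow_zero, one_smul, ContinuousLinearMap.one_def, ContinuousLinearMap.comp_id]
    | succ k ih =>
      rw [pow_succ, ContinuousLinearMap.mul_def, ← ContinuousLinearMap.comp_assoc, ih,
        ContinuousLinearMap.smul_comp, h, smul_smul, pow_succ]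
  have hmap := (ContinuousLinearMap.compL 𝕜 E E F L).map_tsum
    (NormedSpace.expSeries_summable' (𝕂 := 𝕜) X)
  simp only [ContinuousLinearMap.compL_apply, ContinuousLinearMap.comp_smul, hpow, smul_smul]
    at hmap
  rw [NormedSpace.exp_eq_tsum 𝕜, NormedSpace.exp_eq_tsum 𝕜, hmap]
  exact (NormedSpace.expSeries_summable' (𝕂 := 𝕜) c).tsum_smul_const ..

lemma sobolevWeight_singleton (n : ℤ) : sobolevWeight {n} = 1 + (n.natAbs : ENNReal) ^ 2 := by
  rw [sobolevWeight, withDensity_apply _ (measurableSet_singleton n), lintegral_singleton,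
    Measure.count_singleton, mul_one]

lemma sobolevWeight_real_singleton (n : ℤ) : sobolevWeight.real {n} = 1 + (n : ℝ) ^ 2 := by
  simp [measureReal_def, sobolevWeight_singleton, ENNReal.toReal_add]

lemma ae_sobolevWeight_iff {p : ℤ → Prop} : (∀ᵐ n ∂sobolevWeight, p n) ↔ ∀ n, p n := by
  simp [ae_iff_of_countable, sobolevWeight_singleton]

lemma integrable_sobolevWeight_iff {E : Type*} [NormedAddCommGroup E] [NormedSpace ℝ E]
    {g : ℤ → E} :
    Integrable g sobolevWeight ↔ Summable fun n : ℤ => (1 + (n : ℝ) ^ 2) * ‖g n‖ := by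
  rw [sobolevWeight, integrable_withDensity_iff_integrable_smul' (measurable_of_countable _)
    (.of_forall fun n => by simp), integrable_count_iff]
  have habs (n : ℤ) : |1 + (n : ℝ) ^ 2| = 1 + (n : ℝ) ^ 2 := abs_of_pos (by positivity)
  simp [norm_smul, ENNReal.toReal_add, habs]

lemma summable_inv_one_add_sq : Summable fun n : ℤ => (1 + (n : ℝ) ^ 2)⁻¹ := by
  refine (Real.summable_one_div_int_pow.mpr one_lt_two).of_norm_bounded_eventually ?_
  filter_upwards [Filter.eventually_cofinite_ne 0] with n hn
  rw [norm_inv, Real.norm_of_nonneg (by positivity), one_div]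
  have : (n : ℝ) ≠ 0 := by exact_mod_cast hn
  gcongr
  linarith

lemma memLp_sobolevWeight_two_iff {g : ℤ → ℂ} :
    MemLp g 2 sobolevWeight ↔ Summable fun n : ℤ => (1 + (n : ℝ) ^ 2) * ‖g n‖ ^ 2 := by
  rw [memLp_two_iff_integrable_sq_norm (measurable_of_countable g).aestronglyMeasurable,
    integrable_sobolevWeight_iff]
  simp

lemma Complex.one_add_intCast_sq_ne_zero (n : ℤ) : (1 + (n : ℂ) ^ 2) ≠ 0 := by
  exact_mod_cast (by positivity : (1 + (n : ℝ) ^ 2) ≠ 0)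

lemma Complex.norm_one_add_intCast_sq (n : ℤ) : ‖(1 + (n : ℂ) ^ 2)‖ = 1 + (n : ℝ) ^ 2 := by
  rw [← Complex.norm_of_nonneg (by positivity : 0 ≤ 1 + (n : ℝ) ^ 2)]
  push_cast
  rfl

namespace H1Torus

lemma ext {a b : H1Torus} (h : ∀ n, (a : ℤ → ℂ) n = (b : ℤ → ℂ) n) : a = b :=
  Lp.ext (ae_sobolevWeight_iff.mpr h)

lemma inner_eq_tsum (a b : H1Torus) :
    inner ℂ a b = ∑' n : ℤ, (1 + (n : ℂ) ^ 2) * ((b : ℤ → ℂ) n * conj ((a : ℤ → ℂ) n)) := by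
  rw [L2.inner_def, integral_countable (L2.integrable_inner a b)]
  simp [sobolevWeight_real_singleton]

noncomputable def single (m : ℤ) : H1Torus :=
  (memLp_sobolevWeight_two_iff.mpr (summable_of_ne_finset_zero (s := {m}) fun n hn => by
    simp [Finset.mem_singleton.not.mp hn])).toLp (Pi.single m (1 : ℂ))

lemma coeFn_single (m : ℤ) : ⇑(single m) = Pi.single m (1 : ℂ) :=
  funext (ae_sobolevWeight_iff.mp (MemLp.coeFn_toLp _))

lemma inner_single_left (m : ℤ) (a : H1Torus) :
    inner ℂ (single m) a = (1 + (m : ℂ) ^ 2) * (a : ℤ → ℂ) m := by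
  rw [inner_eq_tsum, tsum_eq_single m fun n hn => by simp [coeFn_single, hn]]
  simp [coeFn_single]

lemma dense_span_range_single : Dense (Submodule.span ℂ (Set.range single) : Set H1Torus) := by
  rw [Submodule.dense_iff_topologicalClosure_eq_top, Submodule.topologicalClosure_eq_top_iff,
    Submodule.eq_bot_iff]
  intro a ha
  refine ext fun m => ?_
  have h := (Submodule.mem_orthogonal _ a).mp ha (single m) (Submodule.subset_span ⟨m, rfl⟩)
  rw [inner_single_left] at h
  rw [(mul_eq_zero.mp h).resolve_left (Complex.one_add_intCast_sq_ne_zero m)]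
  exact (ae_sobolevWeight_iff.mp (Lp.coeFn_zero ℂ 2 sobolevWeight) m).symm

noncomputable def reproducingKernel (z : Circle) : H1Torus :=
  (memLp_sobolevWeight_two_iff.mpr (summable_inv_one_add_sq.congr fun n => by
    have : (1 + (n : ℝ) ^ 2) ≠ 0 := by positivity
    simp [Complex.norm_one_add_intCast_sq, Circle.norm_coe]
    field_simp)).toLp fun n : ℤ => conj ((z : ℂ) ^ n) / (1 + (n : ℂ) ^ 2)

lemma coeFn_reproducingKernel (z : Circle) :
    ⇑(reproducingKernel z) = fun n : ℤ => conj ((z : ℂ) ^ n) / (1 + (n : ℂ) ^ 2) :=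
  funext (ae_sobolevWeight_iff.mp (MemLp.coeFn_toLp _))

noncomputable def evalAt (z : Circle) : H1Torus →L[ℂ] ℂ := innerSL ℂ (reproducingKernel z)

lemma evalAt_apply (z : Circle) (a : H1Torus) :
    evalAt z a = ∑' n : ℤ, (a : ℤ → ℂ) n * (z : ℂ) ^ n := by
  rw [evalAt, innerSL_apply_apply, inner_eq_tsum]
  refine tsum_congr fun n => ?_
  have := Complex.one_add_intCast_sq_ne_zero n
  simp [coeFn_reproducingKernel]
  field_simp

lemma summable_norm (a : H1Torus) : Summable fun n : ℤ => ‖(a : ℤ → ℂ) n‖ := by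
  refine (integrable_sobolevWeight_iff.mp
    (L2.integrable_inner (𝕜 := ℂ) (reproducingKernel 1) a)).congr fun n => ?_
  have : (1 + (n : ℝ) ^ 2) ≠ 0 := by positivity
  simp [coeFn_reproducingKernel, Complex.norm_one_add_intCast_sq]
  field_simp

lemma evalAt_single (z : Circle) (m : ℤ) : evalAt z (single m) = (z : ℂ) ^ m := by
  rw [evalAt_apply, tsum_eq_single m fun n hn => by simp [coeFn_single, hn]]
  simp [coeFn_single]

lemma continuous_evalAt_apply (a : H1Torus) : Continuous fun z : Circle => evalAt z a := by
  simp_rw [evalAt_apply, ← Circle.coe_zpow]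
  refine continuous_tsum (fun n => continuous_const.mul (continuous_subtype_val.comp
    (continuous_zpow n))) (summable_norm a) fun n z => ?_
  simp [Circle.norm_coe]

def IsShift (T : H1Torus →L[ℂ] H1Torus) : Prop :=
  ∀ (a : H1Torus) (n : ℤ), (T a : ℤ → ℂ) n = (a : ℤ → ℂ) (n - 1)

lemma IsShift.evalAt_eq_mul {T : H1Torus →L[ℂ] H1Torus} (hT : IsShift T) (z : Circle)
    (a : H1Torus) : evalAt z (T a) = z * evalAt z a := by
  rw [evalAt_apply, evalAt_apply, ← tsum_mul_left,
    ← (Equiv.addRight (1 : ℤ)).tsum_eq fun n => (T a : ℤ → ℂ) n * (z : ℂ) ^ n]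
  refine tsum_congr fun n => ?_
  rw [Equiv.coe_addRight, hT, add_sub_cancel_right, zpow_add_one₀ (Circle.coe_ne_zero z)]
  ring

lemma IsShift.apply_single {T : H1Torus →L[ℂ] H1Torus} (hT : IsShift T) (m : ℤ) :
    T (single m) = single (m + 1) :=
  ext fun n => by simp [hT _ n, coeFn_single, Pi.single_apply, sub_eq_iff_eq_add]

lemma IsShift.eq_smul_evalAt {T : H1Torus →L[ℂ] H1Torus} (hT : IsShift T) {z : Circle}
    {L : H1Torus →L[ℂ] ℂ} (hL : ∀ a, L (T a) = z * L a) : L = L (single 0) • evalAt z := by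
  have hstep (m : ℤ) : L (single (m + 1)) = z * L (single m) := by rw [← hT.apply_single, hL]
  refine ContinuousLinearMap.ext_on dense_span_range_single ?_
  rintro _ ⟨m, rfl⟩
  rw [smul_apply, evalAt_single, smul_eq_mul]
  induction m using Int.induction_on with
  | zero => simp
  | succ k ih => rw [hstep, ih, zpow_add_one₀ (Circle.coe_ne_zero z)]; ring
  | pred k ih =>
    rw [← mul_right_inj' (Circle.coe_ne_zero z), ← hstep, sub_add_cancel, ih,
      zpow_sub_one₀ (Circle.coe_ne_zero z)]
    field_simp [Circle.coe_ne_zero z]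

end H1Torus

/-- on the torus `𝕋`, the multiplication operator `M_z` (which, in the
Fourier realization of `H¹(𝕋)` as the weighted space `ℓ²(ℤ, (1+n²))`, is the shift
`(M_z a)ₙ = a_{n-1}`) is not the exponential of any bounded operator `X` on `H¹(𝕋)` that
is antihermitian for the `L²` inner product `⟨a, b⟩_{L²} = ∑ₙ conj(aₙ) bₙ`. -/
theorem Mz_not_exponential_of_L2_antihermitian :
    ¬ ∃ X : H1Torus →L[ℂ] H1Torus,
        (∀ a b : H1Torus,
          (∑' n : ℤ, starRingEnd ℂ ((X a : ℤ → ℂ) n) * (b : ℤ → ℂ) n)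
            = - ∑' n : ℤ, starRingEnd ℂ ((a : ℤ → ℂ) n) * ((X b : ℤ → ℂ) n)) ∧
        (∀ (a : H1Torus) (n : ℤ),
          ((NormedSpace.exp X) a : ℤ → ℂ) n = (a : ℤ → ℂ) (n - 1)) := by
  rintro ⟨X, -, hshift : H1Torus.IsShift (NormedSpace.exp X)⟩
  let Φ := H1Torus.evalAt
  let e₀ := H1Torus.single 0
  refine Circle.not_exists_continuous_log
    ⟨fun z => Φ z (X e₀), H1Torus.continuous_evalAt_apply _, fun z => ?_⟩
  have hcomm (a : H1Torus) : X (NormedSpace.exp X a) = NormedSpace.exp X (X a) :=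
    congr($((Commute.refl X).exp_right.eq) a)
  have heigen : Φ z ∘L X = Φ z (X e₀) • Φ z :=
    hshift.eq_smul_evalAt fun a => by
      rw [ContinuousLinearMap.comp_apply, ContinuousLinearMap.comp_apply, hcomm]
      exact hshift.evalAt_eq_mul z (X a)
  have hexp := congr($(ContinuousLinearMap.comp_exp_eq_exp_smul_of_comp_eq_smul heigen) e₀)
  simpa [Φ, e₀, hshift.evalAt_eq_mul, H1Torus.evalAt_single, Complex.exp_eq_exp_ℂ] using hexp.symm
end
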